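/- A finite group is pseudo-nilpotent (as a semigroup) if and only if it is nilpotent. -/

import Mathlib

/-- One multiplication step `a · w · b` where `w` ranges over `S¹`
(`none` playing the role of the adjoined identity). -/
def mulW {S : Type*} [Semigroup S] (a : S) (w : Option S) (b : S) : S :=
  match w with
  | none => a * b
  | some c => a * c * b

/-- The Mal'cev sequences: `(malcev x y w n).1 = λ_n` and `(malcev x y w n).2 = ρ_n`,
with `λ_0 = x`, `ρ_0 = y`, `λ_{n+1} = λ_n w_{n+1} ρ_n`, `ρ_{n+1} = ρ_n w_{n+1} λ_n`. -/
def malcev {S : Type*} [Semigroup S] (x y : S) (w : ℕ → Option S) : ℕ → S × S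
  | 0 => (x, y)
  | n + 1 =>
      let p := malcev x y w n
      (mulW p.1 (w n) p.2, mulW p.2 (w n) p.1)

/-- Mal'cev nilpotency of a (multiplicatively closed) subset `A` of `S`,
computed with parameters from `A¹`. -/
def SetMN {S : Type*} [Semigroup S] (A : Set S) : Prop :=
  ∃ n : ℕ, 0 < n ∧ ∀ x ∈ A, ∀ y ∈ A, ∀ w : ℕ → Option S,
    (∀ k c, w k = some c → c ∈ A) →
    (malcev x y w n).1 = (malcev x y w n).2

/-- A semigroup is Mal'cev nilpotent. -/
def IsMN (S : Type*) [Semigroup S] : Prop := SetMN (Set.univ : Set S)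

/-- Equality in the Rees quotient by (the possibly empty ideal) `I`. -/
def ReesEq {S : Type*} [Semigroup S] (I : Set S) (a b : S) : Prop :=
  a = b ∨ (a ∈ I ∧ b ∈ I)

/-- Mal'cev nilpotency of the Rees quotient `A / I` (computed by lifting to `A`). -/
def SetMNMod {S : Type*} [Semigroup S] (I A : Set S) : Prop :=
  ∃ n : ℕ, 0 < n ∧ ∀ x ∈ A, ∀ y ∈ A, ∀ w : ℕ → Option S,
    (∀ k c, w k = some c → c ∈ A) →
    ReesEq I (malcev x y w n).1 (malcev x y w n).2

/-- `I` is an ideal of (the mul-closed subset) `T`; the empty set counts as an ideal. -/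
def IsIdealIn {S : Type*} [Semigroup S] (T I : Set S) : Prop :=
  I ⊆ T ∧ ∀ a ∈ I, ∀ t ∈ T, t * a ∈ I ∧ a * t ∈ I

/-- Edge of the upper non-nilpotent graph `N_S`: `⟨a,b⟩` is not Mal'cev nilpotent. -/
def NEdge {S : Type*} [Semigroup S] (a b : S) : Prop :=
  a ≠ b ∧ ¬ SetMN (Subsemigroup.closure ({a, b} : Set S) : Set S)

/-- The generating set of the subsemigroup `⟨x, y, w_1, …, w_m⟩`. -/
def genSet {S : Type*} [Semigroup S] (x y : S) (w : ℕ → Option S) (m : ℕ) : Set S :=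
  {x, y} ∪ {c | ∃ k, k < m ∧ w k = some c}

/-- A pseudo-nilpotent semigroup. -/
def IsPN (S : Type*) [Semigroup S] : Prop :=
  ∀ (x y : S) (w : ℕ → Option S) (m : ℕ) (I : Set S),
    IsIdealIn (Subsemigroup.closure (genSet x y w m) : Set S) I →
    (malcev x y w m).1 ∉ I → (malcev x y w m).2 ∉ I →
    (∃ t, t < m ∧ (malcev x y w t).1 ≠ (malcev x y w t).2 ∧
      malcev x y w t = malcev x y w m) →
    ∀ i ≤ m, ¬ SetMNMod I
      (Subsemigroup.closure ({(malcev x y w i).1, (malcev x y w i).2} : Set S) : Set S)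

/-!
A nilpotent group cannot satisfy the cycle hypothesis of pseudo-nilpotency: writing
`g_n = λ_n ρ_n⁻¹`, one has `g_{n+1} = ⁅g_n, ρ_n w_{n+1}⁆`, so each step pushes `g_n` one level
down the upper central series, and a cycle `(λ_t, ρ_t) = (λ_m, ρ_m)` forces `g_t = 1`.

Conversely, if `x` lies outside the `N`-th centre, `N = |G × G|`, the parameters `w_k` can be
chosen so that `g_k` stays outside the `(N - k)`-th centre, hence `λ_k ≠ ρ_k` for `k ≤ N`.
Starting from `(x, 1)`, pigeonhole yields a cycle, while `⟨x, 1⟩` is commutative, hence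
Mal'cev nilpotent, contradicting pseudo-nilpotency.
-/

section Semigroup

variable {S : Type*} [Semigroup S]

theorem malcev_add (x y : S) (w : ℕ → Option S) (k n : ℕ) :
    malcev x y w (k + n) =
      malcev (malcev x y w n).1 (malcev x y w n).2 (fun j => w (j + n)) k := by
  induction k with
  | zero => rw [Nat.zero_add]; rfl
  | succ k ih => rw [Nat.add_right_comm, malcev, ih]; rfl

theorem exists_lt_le_card_malcev_eq [Finite S] (x y : S) (w : ℕ → Option S) :
    ∃ t m, t < m ∧ m ≤ Nat.card (S × S) ∧ malcev x y w t = malcev x y w m := by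
  have := Fintype.ofFinite S
  obtain ⟨a, b, hab, heq⟩ := Fintype.exists_ne_map_eq_of_card_lt
    (fun k : Fin (Nat.card (S × S) + 1) => malcev x y w k) (by simp [Nat.card_eq_fintype_card])
  rcases lt_or_gt_of_ne hab with h | h
  · exact ⟨a, b, h, Nat.lt_succ_iff.mp b.2, heq⟩
  · exact ⟨b, a, h, Nat.lt_succ_iff.mp a.2, heq.symm⟩

theorem setMNMod_closure_of_comm (I : Set S) {s : Set S}
    (hs : ∀ a ∈ s, ∀ b ∈ s, a * b = b * a) : SetMNMod I (Subsemigroup.closure s) := by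
  have hle := Subsemigroup.closure_le_centralizer_centralizer s
  have hcomm : ∀ a ∈ Subsemigroup.closure s, ∀ b ∈ Subsemigroup.closure s, a * b = b * a :=
    fun a ha b hb => Set.centralizer_centralizer_comm_of_comm hs a (hle ha) b (hle hb)
  refine ⟨1, one_pos, fun a ha b hb w hw => Or.inl ?_⟩
  change mulW a (w 0) b = mulW b (w 0) a
  rcases hw0 : w 0 with _ | c
  · exact hcomm a ha b hb
  · have hc := hw 0 c hw0
    change a * c * b = b * c * a
    rw [hcomm a ha c hc, mul_assoc, hcomm a ha b hb, ← mul_assoc, hcomm c hc b hb, mul_assoc]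

theorem isIdealIn_empty (T : Set S) : IsIdealIn T ∅ :=
  ⟨Set.empty_subset T, fun _ ha => ha.elim⟩

end Semigroup

section Group

open scoped commutatorElement

variable {G : Type*} [Group G]

theorem mulW_mul_inv (a b : G) (u : Option G) :
    mulW a u b * (mulW b u a)⁻¹ = ⁅a * b⁻¹, b * u.getD 1⁆ := by
  cases u <;> simp only [mulW, Option.getD, commutatorElement_def] <;> group

theorem malcev_mul_inv_mem_upperCentralSeries {x y : G} (w : ℕ → Option G) {k n : ℕ}
    (h : x * y⁻¹ ∈ Subgroup.upperCentralSeries G (k + n)) :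
    (malcev x y w n).1 * (malcev x y w n).2⁻¹ ∈ Subgroup.upperCentralSeries G k := by
  induction n generalizing k with
  | zero => exact h
  | succ n ih =>
    have hn := ih (k := k + 1) (by rwa [Nat.add_right_comm])
    rw [malcev, mulW_mul_inv]
    exact Subgroup.mem_upperCentralSeries_succ_iff.mp hn _

theorem malcev_fst_eq_snd_of_cycle [Group.IsNilpotent G] (x y : G) (w : ℕ → Option G)
    {t m : ℕ} (htm : t < m) (hcyc : malcev x y w t = malcev x y w m) :
    (malcev x y w t).1 = (malcev x y w t).2 := by
  obtain ⟨c, hc⟩ := Group.IsNilpotent.nilpotent G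
  set g := (malcev x y w t).1 * (malcev x y w t).2⁻¹
  have hdescend : ∀ r, g ∈ Subgroup.upperCentralSeries G (r * (m - t)) →
      g ∈ Subgroup.upperCentralSeries G 0 := by
    intro r
    induction r with
    | zero => simp
    | succ r ih =>
      intro hg
      apply ih
      -- `m - t` steps from `(λ_t, ρ_t)` lead to `(λ_m, ρ_m) = (λ_t, ρ_t)`
      have := malcev_mul_inv_mem_upperCentralSeries (fun j => w (j + t)) (n := m - t)
        (by rwa [← Nat.succ_mul])
      rwa [← malcev_add, Nat.sub_add_cancel htm.le, ← hcyc] at this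
  have hg : g ∈ Subgroup.upperCentralSeries G (c * (m - t)) :=
    Subgroup.upperCentralSeries_mono G (Nat.le_mul_of_pos_right c (Nat.sub_pos_of_lt htm))
      (hc ▸ Subgroup.mem_top g)
  exact mul_inv_eq_one.mp (Subgroup.mem_bot.mp (hdescend c hg))

theorem exists_malcev_ne_of_mul_inv_notMem_upperCentralSeries {x y : G} {n : ℕ}
    (hxy : x * y⁻¹ ∉ Subgroup.upperCentralSeries G n) :
    ∃ w : ℕ → Option G, ∀ k ≤ n, (malcev x y w k).1 ≠ (malcev x y w k).2 := by
  induction n generalizing x y with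
  | zero =>
    refine ⟨fun _ => none, fun k hk => ?_⟩
    obtain rfl := Nat.le_zero.mp hk
    rintro (rfl : x = y)
    simp at hxy
  | succ n ih =>
    obtain ⟨h, hh⟩ := not_forall.mp (mt Subgroup.mem_upperCentralSeries_succ_iff.mpr hxy)
    have hstep : (malcev x y (fun _ => some (y⁻¹ * h)) 1).1 *
        (malcev x y (fun _ => some (y⁻¹ * h)) 1).2⁻¹ = ⁅x * y⁻¹, h⁆ := by
      rw [malcev, mulW_mul_inv]
      change ⁅x * y⁻¹, y * (y⁻¹ * h)⁆ = _
      rw [mul_inv_cancel_left]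
    obtain ⟨w, hw⟩ := ih (hstep ▸ hh)
    refine ⟨fun | 0 => some (y⁻¹ * h) | j + 1 => w j, fun k hk => ?_⟩
    rcases k with _ | k
    · rintro (rfl : x = y)
      simp at hxy
    · rw [malcev_add]
      exact hw k (by omega)

end Group

/-- A finite group is pseudo-nilpotent (as a semigroup) iff it is nilpotent. -/
theorem stmt3 {G : Type*} [Group G] [Finite G] :
    IsPN G ↔ Group.IsNilpotent G := by
  refine ⟨fun hPN => ?_, fun _ x y w m I _ _ _ ⟨t, htm, hne, hcyc⟩ => ?_⟩
  · by_contra hnil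
    obtain ⟨x, hx⟩ : ∃ x, x ∉ Subgroup.upperCentralSeries G (Nat.card (G × G)) := by
      by_contra! h
      exact hnil ⟨_, (Subgroup.eq_top_iff' _).mpr h⟩
    obtain ⟨w, hw⟩ := exists_malcev_ne_of_mul_inv_notMem_upperCentralSeries (x := x) (y := 1)
      (by rwa [inv_one, mul_one])
    obtain ⟨t, m, htm, hm, hcyc⟩ := exists_lt_le_card_malcev_eq x 1 w
    refine hPN x 1 w m ∅ (isIdealIn_empty _) (Set.notMem_empty _) (Set.notMem_empty _)
      ⟨t, htm, hw t (by omega), hcyc⟩ 0 m.zero_le (setMNMod_closure_of_comm ∅ ?_)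
    rintro a (rfl | rfl) b (rfl | rfl) <;> simp [malcev]
  · exact (hne (malcev_fst_eq_snd_of_cycle x y w htm hcyc)).elim
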